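/- (Marked Schreyer theorem) Let J ⊂ S be a quasi-stable monomial ideal with Pommaret basis P(J) = {x^{α(1)},…,x^{α(m)}} and G = {f_{α(1)},…,f_{α(m)}} a P(J)-marked basis. Let U = ⊕_{l=1}^m (X_nonmult(x^{α(l)})) e_l ⊆ S^m_d, d = (deg x^{α(1)},…,deg x^{α(m)}), be the quasi-stable module whose Pommaret basis is {x_i e_l : x_i nonmultiplicative for x^{α(l)}}. Then the set G_Syz of syzygies S_{k;i} = x_i e_k − Σ_l P_l^{k;i} e_l is a P(U)-marked basis of the syzygy module Syz(G); in particular Syz(G) is generated by G_Syz. -/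

import Mathlib

open MvPolynomial

namespace MB

/-- Exponent (multi-index) of a term in the variables `x_0, …, x_n`. -/
abbrev Exp (n : ℕ) := Fin (n+1) →₀ ℕ

variable {n : ℕ}

/-- Total degree of a term. -/
def degE (α : Exp n) : ℕ := α.sum fun _ e => e

/-- `x_i` is a multiplicative variable for the term `x^α`, i.e. `x_i ≤ min(x^α)`. -/
def mult (α : Exp n) (i : Fin (n+1)) : Prop := ∀ j ∈ α.support, i ≤ j

/-- Every variable occurring in `x^δ` is multiplicative for `x^α`. -/
def multExp (α δ : Exp n) : Prop := ∀ i ∈ δ.support, mult α i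

/-- Pommaret cone of a term. -/
def pommaretCone (α : Exp n) : Set (Exp n) := {γ | ∃ δ, multExp α δ ∧ γ = α + δ}

/-- A set of terms is (the set of terms of) a monomial ideal. -/
def IsMonomialIdeal (T : Set (Exp n)) : Prop := ∀ α ∈ T, ∀ β, α + β ∈ T

/-- `P` is a Pommaret basis of the set of terms `T`: the terms of `T` are the
disjoint union of the Pommaret cones of the elements of `P`. -/
def IsPommaretBasis (P : Finset (Exp n)) (T : Set (Exp n)) : Prop :=
  (∀ γ, γ ∈ T ↔ ∃ α ∈ P, γ ∈ pommaretCone α) ∧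
  ∀ γ : Exp n, ∀ α ∈ P, ∀ β ∈ P, γ ∈ pommaretCone α → γ ∈ pommaretCone β → α = β

/-- Lexicographic order on terms (with `x_n > … > x_0` significance). -/
def lexLt (η δ : Exp n) : Prop := ∃ i, η i < δ i ∧ ∀ j, i < j → η j = δ j

/-- Terms of the saturation `(J : (x_0,…,x_n)^∞)` of a monomial ideal. -/
def satTerms (T : Set (Exp n)) : Set (Exp n) :=
  {α | ∃ j : ℕ, ∀ β : Exp n, degE β = j → α + β ∈ T}

section ModuleDefs

variable (A : Type*) [CommRing A] {κ : Type*} [Fintype κ] [DecidableEq κ]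

/-- The term `x^α e_k` of the free module. -/
noncomputable def termV (α : Exp n) (k : κ) : κ → MvPolynomial (Fin (n+1)) A :=
  Pi.single k (monomial α 1)

variable {A}

/-- Homogeneity of degree `s` in `S^m_d` (with weight vector `d`). -/
def IsHomogV (d : κ → ℤ) (f : κ → MvPolynomial (Fin (n+1)) A) (s : ℤ) : Prop :=
  ∀ k, ∀ β ∈ (f k).support, (degE β : ℤ) + d k = s

variable (A)

/-- The degree-`s` component `(S^m_d)_s` as an `A`-submodule. -/
noncomputable def homogCompV (d : κ → ℤ) (s : ℤ) :
    Submodule A (κ → MvPolynomial (Fin (n+1)) A) where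
  carrier := {f | IsHomogV d f s}
  add_mem' := by
    intro f g hf hg k β hβ
    rcases Finset.mem_union.mp (MvPolynomial.support_add hβ) with h | h
    · exact hf k β h
    · exact hg k β h
  zero_mem' := by intro k β hβ; simp at hβ
  smul_mem' := by
    intro a f hf k β hβ
    exact hf k β (MvPolynomial.support_smul hβ)

/-- The set `N(U)` of terms of `S^m_d` not belonging to the monomial module `U = ⊕ J^(k) e_k`. -/
def NUTerms (J : κ → Set (Exp n)) : Set (κ → MvPolynomial (Fin (n+1)) A) :=
  {v | ∃ k, ∃ α, α ∉ J k ∧ v = termV A α k}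

/-- The degree-`s` part `N(U)_s`. -/
def NUTermsDeg (d : κ → ℤ) (J : κ → Set (Exp n)) (s : ℤ) :
    Set (κ → MvPolynomial (Fin (n+1)) A) :=
  {v | ∃ k, ∃ α, α ∉ J k ∧ (degE α : ℤ) + d k = s ∧ v = termV A α k}

variable {A}

/-- A `P(U)`-marked set: for each `x^α e_k` with `α ∈ P k`, the element `g α k` has
head term `x^α e_k` (coefficient `1`) and all other terms in `N(U)` of the same degree. -/
def IsMarkedSetV (d : κ → ℤ) (J : κ → Set (Exp n)) (P : κ → Finset (Exp n))
    (g : Exp n → κ → (κ → MvPolynomial (Fin (n+1)) A)) : Prop :=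
  ∀ k, ∀ α ∈ P k, ∀ l, ∀ β ∈ ((g α k - termV A α k) l).support,
    β ∉ J l ∧ (degE β : ℤ) + d l = (degE α : ℤ) + d k

/-- The underlying set of elements of the marked set `G`. -/
def GSet (P : κ → Finset (Exp n)) (g : Exp n → κ → (κ → MvPolynomial (Fin (n+1)) A)) :
    Set (κ → MvPolynomial (Fin (n+1)) A) :=
  {v | ∃ k, ∃ α ∈ P k, v = g α k}

/-- The set `G^(s)` of multiplicative multiples of elements of `G` of degree `s`. -/
def GSdeg (d : κ → ℤ) (P : κ → Finset (Exp n))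
    (g : Exp n → κ → (κ → MvPolynomial (Fin (n+1)) A)) (s : ℤ) :
    Set (κ → MvPolynomial (Fin (n+1)) A) :=
  {v | ∃ k, ∃ α ∈ P k, ∃ δ : Exp n, multExp α δ ∧
    (degE δ : ℤ) + (degE α : ℤ) + d k = s ∧ v = (monomial δ (1:A)) • g α k}

/-- The `S`-submodule `⟨G⟩` generated by the marked set. -/
noncomputable def GmodS (P : κ → Finset (Exp n))
    (g : Exp n → κ → (κ → MvPolynomial (Fin (n+1)) A)) :
    Submodule (MvPolynomial (Fin (n+1)) A) (κ → MvPolynomial (Fin (n+1)) A) :=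
  Submodule.span _ (GSet P g)

/-- The degree-`s` component `⟨G⟩_s` as an `A`-submodule. -/
noncomputable def GmodDeg (d : κ → ℤ) (P : κ → Finset (Exp n))
    (g : Exp n → κ → (κ → MvPolynomial (Fin (n+1)) A)) (s : ℤ) :
    Submodule A (κ → MvPolynomial (Fin (n+1)) A) :=
  (GmodS P g).restrictScalars A ⊓ homogCompV A d s

/-- `G` is a marked basis: `(S^m_d)_s = ⟨G⟩_s ⊕ ⟨N(U)_s⟩^A` for every degree `s`. -/
def MarkedBasisProp (d : κ → ℤ) (J : κ → Set (Exp n)) (P : κ → Finset (Exp n))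
    (g : Exp n → κ → (κ → MvPolynomial (Fin (n+1)) A)) : Prop :=
  ∀ s : ℤ,
    homogCompV A d s = GmodDeg d P g s ⊔ Submodule.span A (NUTermsDeg A d J s) ∧
    GmodDeg d P g s ⊓ Submodule.span A (NUTermsDeg A d J s) = ⊥

/-- One step of the reduction relation `→_G`. -/
def RedStep (P : κ → Finset (Exp n)) (g : Exp n → κ → (κ → MvPolynomial (Fin (n+1)) A))
    (h h' : κ → MvPolynomial (Fin (n+1)) A) : Prop :=
  ∃ k, ∃ α ∈ P k, ∃ η : Exp n, multExp α η ∧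
    (h k).coeff (η + α) ≠ 0 ∧
    h' = h - ((h k).coeff (η + α)) • ((monomial η (1:A)) • g α k)

end ModuleDefs

section IdealDefs

variable {A : Type*} [CommRing A]

/-- A `P(J)`-marked set of polynomials. -/
def IsMarkedSetI (T : Set (Exp n)) (P : Finset (Exp n))
    (g : Exp n → MvPolynomial (Fin (n+1)) A) : Prop :=
  ∀ α ∈ P, ∀ β ∈ (g α - monomial α (1:A)).support, β ∉ T ∧ degE β = degE α

variable (A)

/-- The degree-`s` monomials not in `T`. -/
def NTermsDegI (T : Set (Exp n)) (s : ℕ) : Set (MvPolynomial (Fin (n+1)) A) :=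
  {p | ∃ β, β ∉ T ∧ degE β = s ∧ p = monomial β (1:A)}

variable {A}

/-- Degree-`s` part of the ideal generated by the marked set. -/
noncomputable def IdealDegI (P : Finset (Exp n)) (g : Exp n → MvPolynomial (Fin (n+1)) A)
    (s : ℕ) : Submodule A (MvPolynomial (Fin (n+1)) A) :=
  (Ideal.span (g '' ↑P)).restrictScalars A ⊓ homogeneousSubmodule (Fin (n+1)) A s

/-- A `P(J)`-marked basis of polynomials: `S_s = (G)_s ⊕ ⟨N(J)_s⟩^A` for all `s`. -/
def IsMarkedBasisI (T : Set (Exp n)) (P : Finset (Exp n))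
    (g : Exp n → MvPolynomial (Fin (n+1)) A) : Prop :=
  IsMarkedSetI T P g ∧ ∀ s : ℕ,
    homogeneousSubmodule (Fin (n+1)) A s
      = IdealDegI P g s ⊔ Submodule.span A (NTermsDegI A T s) ∧
    IdealDegI P g s ⊓ Submodule.span A (NTermsDegI A T s) = ⊥

/-- The polynomial `p` involves only multiplicative variables of `x^α`. -/
def multPoly (α : Exp n) (p : MvPolynomial (Fin (n+1)) A) : Prop :=
  ∀ β ∈ p.support, multExp α β

end IdealDefs

section SyzDefs

variable {A : Type*} [CommRing A]

/-- The map `(c_l) ↦ Σ_l c_l f_{α(l)}` whose kernel is `Syz(G)`. -/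
noncomputable def syzMap (P : Finset (Exp n)) (g : Exp n → MvPolynomial (Fin (n+1)) A) :
    (↥P → MvPolynomial (Fin (n+1)) A) →ₗ[MvPolynomial (Fin (n+1)) A]
      MvPolynomial (Fin (n+1)) A where
  toFun c := ∑ l : ↥P, c l * g l.1
  map_add' c c' := by simp [add_mul, Finset.sum_add_distrib]
  map_smul' a c := by simp [Finset.mul_sum, mul_assoc]

/-- Weight vector for the syzygy module: `d_l = deg x^{α(l)}`. -/
def ddeg (P : Finset (Exp n)) : ↥P → ℤ := fun l => (degE l.1 : ℤ)

/-- Terms of the monomial ideal generated by the nonmultiplicative variables of `x^{α(l)}`. -/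
def Jsyz (P : Finset (Exp n)) : ↥P → Set (Exp n) :=
  fun l => {β | ∃ i ∈ β.support, ¬ mult (l : Exp n) i}

open Classical in
/-- The claimed Pommaret basis `{x_i e_l : x_i nonmultiplicative for x^{α(l)}}`. -/
noncomputable def Psyz (P : Finset (Exp n)) : ↥P → Finset (Exp n) := fun l =>
  (Finset.univ.filter fun i : Fin (n+1) => ¬ mult (l : Exp n) i).image
    fun i => Finsupp.single i 1

open Classical in
/-- The syzygy `S_{k;i} = x_i e_k − Σ_l P_l^{k;i} e_l`. -/
noncomputable def Ssyz (P : Finset (Exp n))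
    (Pc : ↥P → Fin (n+1) → ↥P → MvPolynomial (Fin (n+1)) A)
    (k : ↥P) (i : Fin (n+1)) : ↥P → MvPolynomial (Fin (n+1)) A :=
  fun l => (if l = k then (X i : MvPolynomial (Fin (n+1)) A) else 0) - Pc k i l

/-- The set `G_Syz^(s)`. -/
def GSyzDeg (P : Finset (Exp n))
    (Pc : ↥P → Fin (n+1) → ↥P → MvPolynomial (Fin (n+1)) A) (s : ℤ) :
    Set (↥P → MvPolynomial (Fin (n+1)) A) :=
  {v | ∃ k : ↥P, ∃ i : Fin (n+1), ¬ mult (k : Exp n) i ∧ ∃ δ : Exp n,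
    (∀ j ∈ δ.support, j ≤ i) ∧ (degE δ : ℤ) + 1 + ddeg P k = s ∧
    v = (monomial δ (1:A)) • Ssyz P Pc k i}

end SyzDefs

/-!
A term `x^η e_l` lies in `U` iff some variable of `x^η` is nonmultiplicative for `x^{α(l)}`;
it then factors as `x^δ · x_i e_l`, where `x_i` is the largest variable of `x^η` (necessarily
nonmultiplicative) and `x^δ` is multiplicative for `x_i`. Replacing each such term by
`x^δ S_{l;i}`, and keeping the terms of `N(U)`, changes the term basis of `S^m_d`
unitriangularly and degree-preservingly: the tail of `x^δ S_{l;i}` consists of terms whose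
cofactor is lexicographically smaller than `δ` (with `x_n` most significant), and it is
homogeneous because multiplicative representations are unique. The new family is therefore an
`A`-basis. The map `Σ c_l e_l ↦ Σ c_l f_{α(l)}` kills each `x^δ S_{l;i}` and sends the terms of
`N(U)` to the products `x^δ f_α` with `x^δ` multiplicative, which are `A`-linearly independent,
being unitriangular over the monomials by the same lexicographic argument. So `Syz(G)` is the
`A`-span of the `x^δ S_{l;i}`, which gives both the direct sum decomposition and
`⟨G_Syz⟩ = Syz(G)`.
-/

section Unitriangular

open Submodule Module

variable {ι A M R : Type*} [CommRing A] [AddCommGroup M] [Module A M] [LinearOrder R]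
  (b : Basis ι A M) {u : ι → M} {rank : ι → R}

theorem linearIndependent_of_sub_mem_span_lt
    (hu : ∀ i, u i - b i ∈ span A (b '' {j | rank j < rank i})) : LinearIndependent A u := by
  classical
  have coord_u : ∀ i k, rank i ≤ rank k → b.coord k (u i) = if i = k then 1 else 0 := by
    intro i k hik
    have htail : b.repr (u i - b i) k = 0 := Finsupp.notMem_support_iff.mp fun hk =>
      (lt_irrefl _ ((b.mem_span_image.mp (hu i) hk).trans_le hik))
    rw [Basis.coord_apply, ← sub_add_cancel (u i) (b i), map_add, Finsupp.add_apply, htail,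
      zero_add, b.repr_self, Finsupp.single_apply]
  rw [linearIndependent_iff']
  intro s c hsum i hi
  by_contra hci
  obtain ⟨k, hk, hmax⟩ := (s.filter (c · ≠ 0)).exists_max_image rank
    ⟨i, Finset.mem_filter.mpr ⟨hi, hci⟩⟩
  obtain ⟨hks, hck⟩ := Finset.mem_filter.mp hk
  have hcoord := congrArg (b.coord k) hsum
  rw [map_sum, map_zero, Finset.sum_eq_single_of_mem k hks] at hcoord
  · rw [map_smul, coord_u k k le_rfl, if_pos rfl, smul_eq_mul, mul_one] at hcoord
    exact hck hcoord
  · intro j hjs hjk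
    by_cases hcj : c j = 0
    · rw [hcj, zero_smul, map_zero]
    · rw [map_smul, coord_u j k (hmax j (Finset.mem_filter.mpr ⟨hjs, hcj⟩)), if_neg hjk,
        smul_zero]

theorem mem_span_of_sub_mem_span_lt [WellFoundedLT R] {Δ : Type*} (D : ι → Δ)
    (hu : ∀ i, u i - b i ∈ span A (b '' {j | rank j < rank i ∧ D j = D i})) (i : ι) :
    b i ∈ span A (u '' {j | D j = D i}) := by
  induction i using (InvImage.wf rank wellFounded_lt).induction with
  | _ i ih =>
    have hlower : span A (b '' {j | rank j < rank i ∧ D j = D i})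
        ≤ span A (u '' {j | D j = D i}) := by
      rw [span_le]
      rintro _ ⟨j, ⟨hj, hD⟩, rfl⟩
      exact hD ▸ ih j hj
    simpa using sub_mem (subset_span ⟨i, rfl, rfl⟩ : u i ∈ span A (u '' {j | D j = D i}))
      (hlower (hu i))

noncomputable def unitriangularBasis [WellFoundedLT R] {Δ : Type*} (D : ι → Δ)
    (hu : ∀ i, u i - b i ∈ span A (b '' {j | rank j < rank i ∧ D j = D i})) : Basis ι A M :=
  Basis.mk (linearIndependent_of_sub_mem_span_lt b fun i =>
      span_mono (Set.image_mono fun _ hj => hj.1) (hu i))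
    (by
      rw [← b.span_eq, span_le]
      rintro _ ⟨i, rfl⟩
      exact span_mono (Set.image_subset_range _ _) (mem_span_of_sub_mem_span_lt b D hu i))

theorem coe_unitriangularBasis [WellFoundedLT R] {Δ : Type*} (D : ι → Δ)
    (hu : ∀ i, u i - b i ∈ span A (b '' {j | rank j < rank i ∧ D j = D i})) :
    ⇑(unitriangularBasis b D hu) = u :=
  Basis.coe_mk _ _

end Unitriangular

section Kernel

open Submodule Module

variable {ι A M N : Type*} [CommRing A] [AddCommGroup M] [Module A M] [AddCommGroup N]
  [Module A N]

theorem eq_zero_of_mem_span_of_linearIndepOn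
    {F : M →ₗ[A] N} {v : ι → M} {s : Set ι} (hli : LinearIndepOn A (F ∘ v) s) {x : M}
    (hx : x ∈ span A (v '' s)) (hFx : F x = 0) : x = 0 := by
  obtain ⟨c, hc, rfl⟩ := (Finsupp.mem_span_image_iff_linearCombination A).mp hx
  rw [Finsupp.apply_linearCombination] at hFx
  rw [linearIndepOn_iff.mp hli c hc hFx, map_zero]

theorem ker_eq_span_image (b : Basis ι A M) (F : M →ₗ[A] N)
    {s : Set ι} (hs : ∀ i ∈ s, F (b i) = 0) (hsc : LinearIndepOn A (F ∘ b) sᶜ) :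
    LinearMap.ker F = span A (b '' s) := by
  have hker : span A (b '' s) ≤ LinearMap.ker F := span_le.mpr (by
    rintro _ ⟨i, hi, rfl⟩
    exact hs i hi)
  refine le_antisymm (fun x hx => ?_) hker
  have htop : span A (b '' s) ⊔ span A (b '' sᶜ) = ⊤ := codisjoint_iff.mp
    (codisjoint_span_image_of_codisjoint b.span_eq isCompl_compl.codisjoint)
  obtain ⟨y, hy, z, hz, rfl⟩ := mem_sup.mp (htop ▸ mem_top : x ∈ span A (b '' s) ⊔ _)
  have hFz : F z = 0 := by
    rw [← add_sub_cancel_left y z, map_sub, LinearMap.mem_ker.mp hx,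
      LinearMap.mem_ker.mp (hker hy), sub_zero]
  rwa [eq_zero_of_mem_span_of_linearIndepOn hsc hz hFz, add_zero]

theorem span_image_inf_span_image (b : Basis ι A M) (s t : Set ι) :
    span A (b '' s) ⊓ span A (b '' t) = span A (b '' (s ∩ t)) := by
  ext x
  simp only [mem_inf, b.mem_span_image, Set.subset_inter_iff]

end Kernel

section ConeRank

variable {n : ℕ}

theorem degE_add (a b : Exp n) : degE (a + b) = degE a + degE b :=
  map_add Finsupp.degree a b

theorem degE_single (i : Fin (n+1)) : degE (Finsupp.single i 1) = 1 :=
  Finsupp.degree_single i 1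

def IsConeDecomposition (T : Set (Exp n)) (base cof : Exp n → Exp n) : Prop :=
  ∀ γ ∈ T, base γ ∈ T ∧ multExp (base γ) (cof γ) ∧ γ = base γ + cof γ

/-- The order dual on indices makes `x_n` the most significant variable. -/
def lexKey (δ : Exp n) : Lex ((Fin (n+1))ᵒᵈ → ℕ) := toLex fun j => δ (OrderDual.ofDual j)

theorem lexKey_lt_of_add_eq {T : Set (Exp n)} (hT : IsMonomialIdeal T) {α β δ δ' : Exp n}
    (hβ : β ∉ T) (hα : α ∈ T) (hm : multExp α δ') (heq : δ + β = α + δ') :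
    lexKey δ' < lexKey δ := by
  rcases lt_trichotomy (lexKey δ') (lexKey δ) with hlt | hkey | hgt
  · exact hlt
  · have hδ : δ' = δ := Finsupp.ext fun j => congrFun (toLex_inj.mp hkey) (OrderDual.toDual j)
    rw [hδ, add_comm α, add_right_inj] at heq
    exact absurd (heq ▸ hα) hβ
  · exfalso
    obtain ⟨i, habove, hi⟩ : ∃ i, (∀ j, i < j → δ j = δ' j) ∧ δ i < δ' i := by
      obtain ⟨i, habove, hi⟩ := hgt
      exact ⟨OrderDual.ofDual i, fun j hj => habove (OrderDual.toDual j) hj, hi⟩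
    have hpt : ∀ j, δ j + β j = α j + δ' j := fun j => by
      simpa using DFunLike.congr_fun heq j
    -- `x_i` divides `x^δ'`, so it is multiplicative for `α`: no variable of `α` lies below it
    have hle : α ≤ β := Finsupp.le_def.mpr fun j => by
      rcases lt_trichotomy j i with hj | rfl | hj
      · by_contra hlt
        have hmi := hm i (Finsupp.mem_support_iff.mpr (by omega)) j
          (Finsupp.mem_support_iff.mpr (by omega))
        exact absurd hmi (not_le.mpr hj)
      · have := hpt j
        omega
      · have := hpt j
        have := habove j hj
        omega
    obtain ⟨c, rfl⟩ := exists_add_of_le hle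
    exact hβ (hT α hα c)

open Classical in
noncomputable def coneRank (T : Set (Exp n)) (cof : Exp n → Exp n) (γ : Exp n) :
    WithBot (Lex ((Fin (n+1))ᵒᵈ → ℕ)) :=
  if γ ∈ T then ↑(lexKey (cof γ)) else ⊥

theorem coneRank_of_mem {T : Set (Exp n)} {cof : Exp n → Exp n} {γ : Exp n} (hγ : γ ∈ T) :
    coneRank T cof γ = ↑(lexKey (cof γ)) := by
  rw [coneRank, if_pos hγ]

theorem coneRank_add_lt {T : Set (Exp n)} (hT : IsMonomialIdeal T) {base cof : Exp n → Exp n}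
    (hdec : IsConeDecomposition T base cof) {β : Exp n} (hβ : β ∉ T) (δ : Exp n) :
    coneRank T cof (δ + β) < ↑(lexKey δ) := by
  by_cases hδβ : δ + β ∈ T
  · obtain ⟨hbase, hm, heq⟩ := hdec _ hδβ
    rw [coneRank_of_mem hδβ, WithBot.coe_lt_coe]
    exact lexKey_lt_of_add_eq hT hβ hbase hm heq
  · rw [coneRank, if_neg hδβ]
    exact WithBot.bot_lt_coe _

end ConeRank

section Pommaret

variable {n : ℕ} {T : Set (Exp n)} {P : Finset (Exp n)}

open Classical in
noncomputable def pommaretDecomp (P : Finset (Exp n)) (γ : Exp n) : Exp n × Exp n :=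
  if h : ∃ p : Exp n × Exp n, p.1 ∈ P ∧ multExp p.1 p.2 ∧ γ = p.1 + p.2 then h.choose
  else (0, 0)

theorem pommaretDecomp_spec (hP : IsPommaretBasis P T) {γ : Exp n} (hγ : γ ∈ T) :
    (pommaretDecomp P γ).1 ∈ P ∧ multExp (pommaretDecomp P γ).1 (pommaretDecomp P γ).2 ∧
      γ = (pommaretDecomp P γ).1 + (pommaretDecomp P γ).2 := by
  have h : ∃ p : Exp n × Exp n, p.1 ∈ P ∧ multExp p.1 p.2 ∧ γ = p.1 + p.2 := by
    obtain ⟨α, hα, δ, hδ, rfl⟩ := (hP.1 γ).mp hγ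
    exact ⟨(α, δ), hα, hδ, rfl⟩
  rw [pommaretDecomp, dif_pos h]
  exact h.choose_spec

theorem mem_of_mem_pommaretBasis (hP : IsPommaretBasis P T) {α : Exp n} (hα : α ∈ P) : α ∈ T :=
  (hP.1 α).mpr ⟨α, hα, 0, fun i hi => by simp at hi, (add_zero α).symm⟩

theorem pommaretDecomp_add (hP : IsPommaretBasis P T) {α δ : Exp n} (hα : α ∈ P)
    (hm : multExp α δ) : pommaretDecomp P (α + δ) = (α, δ) := by
  obtain ⟨hbaseP, hmult, hsum⟩ := pommaretDecomp_spec hP ((hP.1 _).mpr ⟨α, hα, δ, hm, rfl⟩)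
  have hbase : (pommaretDecomp P (α + δ)).1 = α :=
    hP.2 (α + δ) _ hbaseP α hα ⟨_, hmult, hsum⟩ ⟨δ, hm, rfl⟩
  rw [hbase, add_right_inj] at hsum
  exact Prod.ext hbase hsum.symm

theorem isConeDecomposition_pommaretDecomp (hP : IsPommaretBasis P T) :
    IsConeDecomposition T (fun γ => (pommaretDecomp P γ).1) (fun γ => (pommaretDecomp P γ).2) :=
  fun _ hγ =>
    have h := pommaretDecomp_spec hP hγ
    ⟨mem_of_mem_pommaretBasis hP h.1, h.2⟩

end Pommaret

section IdealSide

open MvPolynomial Submodule Module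

variable {n : ℕ} {A : Type*} [CommRing A] {T : Set (Exp n)} {P : Finset (Exp n)}
  {g : Exp n → MvPolynomial (Fin (n+1)) A}

theorem exists_eq_add_of_coeff_monomial_one_mul_ne_zero {σ : Type*} {δ γ : σ →₀ ℕ}
    {t : MvPolynomial σ A} (h : coeff γ (monomial δ 1 * t) ≠ 0) :
    ∃ β ∈ t.support, γ = δ + β := by
  rw [coeff_monomial_mul'] at h
  split_ifs at h with hle
  · obtain ⟨β, rfl⟩ := exists_add_of_le hle
    exact ⟨β, mem_support_iff.mpr (by simpa using h), rfl⟩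
  · exact absurd rfl h

theorem monomial_one_mul_mem_span {δ : Exp n} {t : MvPolynomial (Fin (n+1)) A}
    {s : Set (Exp n)} (h : ∀ β ∈ t.support, δ + β ∈ s) :
    monomial δ 1 * t ∈ span A (basisMonomials (Fin (n+1)) A '' s) := by
  rw [Basis.mem_span_image]
  intro γ hγ
  obtain ⟨β, hβ, rfl⟩ :=
    exists_eq_add_of_coeff_monomial_one_mul_ne_zero (Finsupp.mem_support_iff.mp hγ)
  exact h β hβ

theorem isHomogeneous_of_isMarkedSetI (hMS : IsMarkedSetI T P g) {α : Exp n} (hα : α ∈ P) :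
    (g α).IsHomogeneous (degE α) := by
  have htail : (g α - monomial α 1).IsHomogeneous (degE α) := fun β hβ => by
    rw [← (hMS α hα β (mem_support_iff.mpr hβ)).2]
    show Finsupp.weight 1 β = Finsupp.degree β
    rw [Finsupp.degree_eq_weight_one]
    rfl
  simpa using htail.add (isHomogeneous_monomial 1 rfl)

open Classical in
noncomputable def markedMultiple (T : Set (Exp n)) (P : Finset (Exp n))
    (g : Exp n → MvPolynomial (Fin (n+1)) A) (γ : Exp n) : MvPolynomial (Fin (n+1)) A :=
  if γ ∈ T then monomial (pommaretDecomp P γ).2 1 * g (pommaretDecomp P γ).1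
  else monomial γ 1

theorem markedMultiple_add (hP : IsPommaretBasis P T) {α δ : Exp n} (hα : α ∈ P)
    (hm : multExp α δ) : markedMultiple T P g (α + δ) = monomial δ 1 * g α := by
  rw [markedMultiple, if_pos ((hP.1 _).mpr ⟨α, hα, δ, hm, rfl⟩), pommaretDecomp_add hP hα hm]

theorem markedMultiple_sub_mem_span (hT : IsMonomialIdeal T) (hP : IsPommaretBasis P T)
    (hMS : IsMarkedSetI T P g) (γ : Exp n) :
    markedMultiple T P g γ - basisMonomials (Fin (n+1)) A γ ∈
      span A (basisMonomials (Fin (n+1)) A ''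
        {γ' | coneRank T (fun γ => (pommaretDecomp P γ).2) γ' <
          coneRank T (fun γ => (pommaretDecomp P γ).2) γ}) := by
  by_cases hγ : γ ∈ T
  · obtain ⟨hα, -, heq⟩ := pommaretDecomp_spec hP hγ
    set α := (pommaretDecomp P γ).1
    set δ := (pommaretDecomp P γ).2
    have hmono : basisMonomials (Fin (n+1)) A γ = monomial δ 1 * monomial α 1 := by
      change monomial γ 1 = _
      rw [monomial_mul, one_mul, add_comm δ α, ← heq]
    have hsplit : markedMultiple T P g γ - basisMonomials (Fin (n+1)) A γ
        = monomial δ 1 * (g α - monomial α 1) := by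
      rw [markedMultiple, if_pos hγ, hmono, mul_sub]
    rw [hsplit]
    refine monomial_one_mul_mem_span fun β hβ => ?_
    rw [Set.mem_ofPred_eq, coneRank_of_mem hγ]
    exact coneRank_add_lt hT (isConeDecomposition_pommaretDecomp hP) (hMS α hα β hβ).1 δ
  · rw [markedMultiple, if_neg hγ, coe_basisMonomials, sub_self]
    exact zero_mem _

theorem linearIndependent_markedMultiple (hT : IsMonomialIdeal T) (hP : IsPommaretBasis P T)
    (hMS : IsMarkedSetI T P g) : LinearIndependent A (markedMultiple T P g) :=
  linearIndependent_of_sub_mem_span_lt _ (markedMultiple_sub_mem_span hT hP hMS)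

end IdealSide

section FreeModule

open MvPolynomial Submodule Module

variable {n : ℕ} {A : Type*} [CommRing A] {κ : Type*}

theorem monomial_smul_termV [DecidableEq κ] (δ α : Exp n) (k : κ) :
    monomial δ (1:A) • termV A α k = termV A (δ + α) k := by
  rw [termV, termV, ← Pi.single_smul', smul_eq_mul, monomial_mul, one_mul]

variable [Fintype κ]

noncomputable def termBasis : Basis (κ × Exp n) A (κ → MvPolynomial (Fin (n+1)) A) :=
  (Pi.basis fun _ => basisMonomials (Fin (n+1)) A).reindex (Equiv.sigmaEquivProd κ (Exp n))

theorem termBasis_apply [DecidableEq κ] (x : κ × Exp n) : termBasis x = termV A x.2 x.1 := by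
  simp [termBasis, termV, Pi.basis_apply, coe_basisMonomials]

theorem termBasis_repr_apply (v : κ → MvPolynomial (Fin (n+1)) A) (x : κ × Exp n) :
    termBasis.repr v x = coeff x.2 (v x.1) := by
  rw [termBasis, Basis.repr_reindex_apply, Pi.basis_repr]
  rfl

theorem homogCompV_eq_span_termBasis [DecidableEq κ] (d : κ → ℤ) (s : ℤ) :
    homogCompV A d s = span A (termBasis '' {x : κ × Exp n | (degE x.2 : ℤ) + d x.1 = s}) := by
  ext v
  rw [Basis.mem_span_image]
  constructor
  · intro hv x hx
    rw [Finset.mem_coe, Finsupp.mem_support_iff, termBasis_repr_apply] at hx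
    exact hv x.1 x.2 (mem_support_iff.mpr hx)
  · intro hv k β hβ
    exact @hv (k, β) (by
      rw [Finset.mem_coe, Finsupp.mem_support_iff, termBasis_repr_apply]
      exact mem_support_iff.mp hβ)

theorem monomial_smul_mem_span_termBasis {δ : Exp n} {w : κ → MvPolynomial (Fin (n+1)) A}
    {s : Set (κ × Exp n)} (h : ∀ l, ∀ β ∈ (w l).support, (l, δ + β) ∈ s) :
    monomial δ (1:A) • w ∈ span A (termBasis '' s) := by
  rw [Basis.mem_span_image]
  rintro ⟨l, γ⟩ hx
  rw [Finset.mem_coe, Finsupp.mem_support_iff, termBasis_repr_apply] at hx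
  obtain ⟨β, hβ, rfl⟩ := exists_eq_add_of_coeff_monomial_one_mul_ne_zero hx
  exact h l β hβ

end FreeModule

section Graded

open MvPolynomial

variable {ι σ A : Type*} [CommRing A]

theorem degree_eq_of_linearCombination_isHomogeneous {u : ι → MvPolynomial σ A} {s : Set ι}
    (hli : LinearIndepOn A u s) {deg : ι → ℕ} (hu : ∀ i ∈ s, (u i).IsHomogeneous (deg i))
    {c : ι →₀ A} (hc : c ∈ Finsupp.supported A A s) {m : ℕ}
    (hm : (Finsupp.linearCombination A u c).IsHomogeneous m) {i : ι} (hi : c i ≠ 0) :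
    deg i = m := by
  classical
  rw [Finsupp.mem_supported] at hc
  have hcomp : homogeneousComponent m (Finsupp.linearCombination A u c)
      = Finsupp.linearCombination A u c := by
    rw [homogeneousComponent_of_mem hm, if_pos rfl]
  -- the components of degree `≠ m` cancel, so by independence their coefficients vanish
  have hoff : Finsupp.linearCombination A u (c.filter (deg · ≠ m)) = 0 := by
    calc Finsupp.linearCombination A u (c.filter (deg · ≠ m))
        = ∑ j ∈ c.support, (c j • u j - homogeneousComponent m (c j • u j)) := by
          rw [Finsupp.linearCombination_apply, Finsupp.sum_filter_index, Finsupp.support_filter,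
            Finset.sum_filter]
          refine Finset.sum_congr rfl fun j hj => ?_
          rw [LinearMap.map_smul_of_tower, homogeneousComponent_of_mem (hu j (hc hj))]
          by_cases hdeg : deg j = m
          · rw [if_pos hdeg.symm, if_neg (not_not.mpr hdeg), sub_self]
          · rw [if_neg (Ne.symm hdeg), if_pos hdeg, smul_zero, sub_zero]
      _ = 0 := by
          have hsum : ∑ j ∈ c.support, c j • u j = Finsupp.linearCombination A u c := by
            rw [Finsupp.linearCombination_apply, Finsupp.sum]
          rw [Finset.sum_sub_distrib, ← map_sum, hsum, hcomp, sub_self]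
  have hsupp : ↑(c.filter (deg · ≠ m)).support ⊆ s := fun x hx => by
    rw [Finset.mem_coe, Finsupp.support_filter, Finset.mem_filter] at hx
    exact hc hx.1
  have hzero := linearIndepOn_iff.mp hli _ ((Finsupp.mem_supported A _).mpr hsupp) hoff
  by_contra hne
  have := DFunLike.congr_fun hzero i
  rw [Finsupp.filter_apply, if_pos hne] at this
  exact hi this

end Graded

section Syzygies

open MvPolynomial Submodule Module

variable {n : ℕ} {A : Type*} [CommRing A] {T : Set (Exp n)} {P : Finset (Exp n)}
  {g : Exp n → MvPolynomial (Fin (n+1)) A}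
  {Pc : ↥P → Fin (n+1) → ↥P → MvPolynomial (Fin (n+1)) A}

def IsMultRep (P : Finset (Exp n)) (g : Exp n → MvPolynomial (Fin (n+1)) A)
    (Pc : ↥P → Fin (n+1) → ↥P → MvPolynomial (Fin (n+1)) A) : Prop :=
  ∀ (k : ↥P) (i : Fin (n+1)), ¬ mult (k : Exp n) i →
    (X i * g (k : Exp n) = ∑ l : ↥P, Pc k i l * g (l : Exp n)) ∧
    ∀ l : ↥P, multPoly (l : Exp n) (Pc k i l)

theorem syzMap_apply (v : ↥P → MvPolynomial (Fin (n+1)) A) :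
    syzMap P g v = ∑ l : ↥P, v l * g (l : Exp n) := rfl

theorem syzMap_termV (hP : IsPommaretBasis P T) {l : ↥P} {η : Exp n}
    (hm : multExp (l : Exp n) η) :
    syzMap P g (termV A η l) = markedMultiple T P g ((l : Exp n) + η) := by
  rw [markedMultiple_add hP l.2 hm, syzMap_apply,
    Finset.sum_eq_single_of_mem l (Finset.mem_univ l)
      fun l' _ hl' => by rw [termV, Pi.single_eq_of_ne hl', zero_mul],
    termV, Pi.single_eq_same]

theorem syzMap_Ssyz {k : ↥P} {i : Fin (n+1)}
    (hrep : X i * g (k : Exp n) = ∑ l : ↥P, Pc k i l * g (l : Exp n)) :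
    syzMap P g (Ssyz P Pc k i) = 0 := by
  simp only [syzMap_apply, Ssyz, sub_mul, Finset.sum_sub_distrib, ite_mul, zero_mul,
    Finset.sum_ite_eq', Finset.mem_univ, if_true, hrep, sub_self]

theorem linearIndepOn_syzMap_termBasis (hT : IsMonomialIdeal T) (hP : IsPommaretBasis P T)
    (hMS : IsMarkedSetI T P g) :
    LinearIndepOn A (fun x => syzMap P g (termBasis x))
      {x : ↥P × Exp n | multExp (x.1 : Exp n) x.2} := by
  have hinj : Function.Injective
      fun x : {x : ↥P × Exp n // multExp (x.1 : Exp n) x.2} => (x.1.1 : Exp n) + x.1.2 := by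
    rintro ⟨⟨l₁, δ₁⟩, h₁⟩ ⟨⟨l₂, δ₂⟩, h₂⟩ heq
    have h := (pommaretDecomp_add hP l₁.2 h₁).symm.trans
      ((congrArg (pommaretDecomp P) heq).trans (pommaretDecomp_add hP l₂.2 h₂))
    simp only [Prod.mk.injEq] at h
    exact Subtype.ext (Prod.ext (Subtype.ext h.1) h.2)
  have hcomp : (fun x : {x : ↥P × Exp n // multExp (x.1 : Exp n) x.2} =>
      syzMap P g (termBasis x.1)) = markedMultiple T P g ∘ fun x => (x.1.1 : Exp n) + x.1.2 :=
    funext fun x => by rw [termBasis_apply, syzMap_termV hP x.2, Function.comp_apply]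
  show LinearIndependent A fun x : {x : ↥P × Exp n // multExp (x.1 : Exp n) x.2} =>
    syzMap P g (termBasis x.1)
  rw [hcomp]
  exact (linearIndependent_markedMultiple hT hP hMS).comp _ hinj

theorem degE_add_eq_of_isHomogeneous_sum_mul (hT : IsMonomialIdeal T) (hP : IsPommaretBasis P T)
    (hMS : IsMarkedSetI T P g) {Q : ↥P → MvPolynomial (Fin (n+1)) A}
    (hQ : ∀ l : ↥P, multPoly (l : Exp n) (Q l)) {m : ℕ}
    (hm : (∑ l : ↥P, Q l * g (l : Exp n)).IsHomogeneous m) {l : ↥P} {β : Exp n}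
    (hβ : β ∈ (Q l).support) : degE β + degE (l : Exp n) = m := by
  have hQrepr : Finsupp.linearCombination A (fun x => syzMap P g (termBasis x)) (termBasis.repr Q)
      = syzMap P g Q := by
    have := Finsupp.apply_linearCombination A ((syzMap P g).restrictScalars A) termBasis
      (termBasis.repr Q)
    rw [termBasis.linearCombination_repr] at this
    exact this.symm
  refine degree_eq_of_linearCombination_isHomogeneous (linearIndepOn_syzMap_termBasis hT hP hMS)
    (deg := fun x => degE x.2 + degE (x.1 : Exp n)) (fun x hx => ?_) (c := termBasis.repr Q) ?_
    (hQrepr ▸ hm) (i := (l, β)) ?_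
  · rw [termBasis_apply, syzMap_termV hP hx, markedMultiple_add hP x.1.2 hx]
    exact (isHomogeneous_monomial 1 rfl).mul (isHomogeneous_of_isMarkedSetI hMS x.1.2)
  · rw [Finsupp.mem_supported]
    intro x hx
    rw [Finset.mem_coe, Finsupp.mem_support_iff, termBasis_repr_apply] at hx
    exact hQ x.1 x.2 (mem_support_iff.mpr hx)
  · rw [termBasis_repr_apply]
    exact mem_support_iff.mp hβ

theorem notMem_Jsyz_iff {l : ↥P} {β : Exp n} : β ∉ Jsyz P l ↔ multExp (l : Exp n) β := by
  simp [Jsyz, multExp]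

theorem notMem_Jsyz_and_degE_add_of_mem_support (hT : IsMonomialIdeal T) (hP : IsPommaretBasis P T)
    (hMS : IsMarkedSetI T P g) (hPc : IsMultRep P g Pc) {k : ↥P} {i : Fin (n+1)}
    (hi : ¬ mult (k : Exp n) i) {l : ↥P} {β : Exp n} (hβ : β ∈ (Pc k i l).support) :
    β ∉ Jsyz P l ∧ degE β + degE (l : Exp n) = 1 + degE (k : Exp n) :=
  ⟨notMem_Jsyz_iff.mpr ((hPc k i hi).2 l β hβ),
    degE_add_eq_of_isHomogeneous_sum_mul hT hP hMS (hPc k i hi).2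
      ((hPc k i hi).1 ▸ (isHomogeneous_X A i).mul (isHomogeneous_of_isMarkedSetI hMS k.2)) hβ⟩

/-- Junk value `x_0` for `η = 0`. -/
noncomputable def maxVar (η : Exp n) : Fin (n+1) := η.support.sup id

theorem le_maxVar {η : Exp n} {j : Fin (n+1)} (hj : j ∈ η.support) : j ≤ maxVar η :=
  Finset.le_sup (f := id) hj

theorem maxVar_mem_support {η : Exp n} (h : η.support.Nonempty) : maxVar η ∈ η.support := by
  obtain ⟨i, hi, heq⟩ := Finset.exists_mem_eq_sup _ h id
  rw [maxVar, heq]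
  exact hi

theorem maxVar_single (i : Fin (n+1)) : maxVar (Finsupp.single i 1) = i := by
  simp [maxVar]

theorem isMonomialIdeal_Jsyz (l : ↥P) : IsMonomialIdeal (Jsyz P l) := by
  rintro α ⟨j, hj, hnm⟩ β
  refine ⟨j, Finsupp.mem_support_iff.mpr ?_, hnm⟩
  have := Finsupp.mem_support_iff.mp hj
  simp only [Finsupp.add_apply]
  omega

theorem not_mult_maxVar {l : ↥P} {η : Exp n} (hη : η ∈ Jsyz P l) :
    ¬ mult (l : Exp n) (maxVar η) := by
  obtain ⟨j, hj, hnm⟩ := hη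
  exact fun hm => hnm fun k hk => (le_maxVar hj).trans (hm k hk)

theorem isConeDecomposition_Jsyz (l : ↥P) :
    IsConeDecomposition (Jsyz P l) (fun η => Finsupp.single (maxVar η) 1)
      (fun η => η - Finsupp.single (maxVar η) 1) := by
  intro η hη
  have hne : η.support.Nonempty := by
    obtain ⟨j, hj, -⟩ := hη
    exact ⟨j, hj⟩
  refine ⟨⟨maxVar η, by simp, not_mult_maxVar hη⟩, fun j hj k hk => ?_, ?_⟩
  · rw [Finsupp.support_single _ one_ne_zero, Finset.mem_singleton] at hk
    rw [hk]
    refine le_maxVar (Finsupp.mem_support_iff.mpr fun h0 => ?_)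
    rw [Finsupp.mem_support_iff, Finsupp.tsub_apply, h0] at hj
    exact hj (Nat.zero_sub _)
  · refine (add_tsub_cancel_of_le (Finsupp.single_le_iff.mpr ?_)).symm
    exact Nat.one_le_iff_ne_zero.mpr (Finsupp.mem_support_iff.mp (maxVar_mem_support hne))

theorem mem_Psyz {l : ↥P} {α : Exp n} :
    α ∈ Psyz P l ↔ ∃ i, ¬ mult (l : Exp n) i ∧ Finsupp.single i 1 = α := by
  simp [Psyz]

/-- Only the values at the head terms `x_i e_k` matter. -/
noncomputable def syzMarkedSet (P : Finset (Exp n))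
    (Pc : ↥P → Fin (n+1) → ↥P → MvPolynomial (Fin (n+1)) A) :
    Exp n → ↥P → (↥P → MvPolynomial (Fin (n+1)) A) :=
  fun α k => Ssyz P Pc k (maxVar α)

theorem Ssyz_sub_termV (k : ↥P) (i : Fin (n+1)) :
    Ssyz P Pc k i - termV A (Finsupp.single i 1) k = -Pc k i := by
  funext l
  by_cases hl : l = k
  · subst hl
    simp [Ssyz, termV, X]
  · simp [Ssyz, termV, hl]

open Classical in
noncomputable def syzMultiple (P : Finset (Exp n))
    (Pc : ↥P → Fin (n+1) → ↥P → MvPolynomial (Fin (n+1)) A) (x : ↥P × Exp n) :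
    ↥P → MvPolynomial (Fin (n+1)) A :=
  if x.2 ∈ Jsyz P x.1 then
    monomial (x.2 - Finsupp.single (maxVar x.2) 1) (1 : A) • Ssyz P Pc x.1 (maxVar x.2)
  else termV A x.2 x.1

noncomputable def syzRank (P : Finset (Exp n)) (x : ↥P × Exp n) :
    WithBot (Lex ((Fin (n+1))ᵒᵈ → ℕ)) :=
  coneRank (Jsyz P x.1) (fun η => η - Finsupp.single (maxVar η) 1) x.2

def syzDeg (P : Finset (Exp n)) (x : ↥P × Exp n) : ℤ := (degE x.2 : ℤ) + ddeg P x.1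

theorem syzMultiple_sub_mem_span (hT : IsMonomialIdeal T) (hP : IsPommaretBasis P T)
    (hMS : IsMarkedSetI T P g) (hPc : IsMultRep P g Pc) (x : ↥P × Exp n) :
    syzMultiple P Pc x - termBasis x ∈
      span A (termBasis '' {y | syzRank P y < syzRank P x ∧ syzDeg P y = syzDeg P x}) := by
  obtain ⟨l, η⟩ := x
  by_cases hx : η ∈ Jsyz P l
  · obtain ⟨-, -, heta⟩ := isConeDecomposition_Jsyz l η hx
    have hi := not_mult_maxVar hx
    set i := maxVar η
    set δ := η - Finsupp.single i 1
    have hdeg : degE η = 1 + degE δ := by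
      conv_lhs => rw [heta]
      rw [degE_add, degE_single]
    have hsplit :
        syzMultiple P Pc (l, η) - termBasis (l, η) = monomial δ (1 : A) • -Pc l i := by
      rw [syzMultiple, if_pos hx, termBasis_apply, ← Ssyz_sub_termV, smul_sub,
        monomial_smul_termV, add_comm δ, ← heta]
    rw [hsplit]
    refine monomial_smul_mem_span_termBasis fun l' β hβ => ?_
    rw [Pi.neg_apply, support_neg] at hβ
    obtain ⟨hβJ, hβdeg⟩ := notMem_Jsyz_and_degE_add_of_mem_support hT hP hMS hPc hi hβ
    refine ⟨?_, ?_⟩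
    · rw [syzRank, syzRank, coneRank_of_mem hx]
      exact coneRank_add_lt (isMonomialIdeal_Jsyz l') (isConeDecomposition_Jsyz l') hβJ δ
    · simp only [syzDeg, ddeg, degE_add]
      omega
  · rw [syzMultiple, if_neg hx, termBasis_apply, sub_self]
    exact zero_mem _

noncomputable def syzBasis (hT : IsMonomialIdeal T) (hP : IsPommaretBasis P T)
    (hMS : IsMarkedSetI T P g) (hPc : IsMultRep P g Pc) :
    Basis (↥P × Exp n) A (↥P → MvPolynomial (Fin (n+1)) A) :=
  unitriangularBasis termBasis (rank := syzRank P) (syzDeg P)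
    (syzMultiple_sub_mem_span hT hP hMS hPc)

theorem coe_syzBasis (hT : IsMonomialIdeal T) (hP : IsPommaretBasis P T)
    (hMS : IsMarkedSetI T P g) (hPc : IsMultRep P g Pc) :
    ⇑(syzBasis hT hP hMS hPc) = syzMultiple P Pc :=
  coe_unitriangularBasis _ _ _

theorem syzMultiple_mem_homogCompV (hT : IsMonomialIdeal T) (hP : IsPommaretBasis P T)
    (hMS : IsMarkedSetI T P g) (hPc : IsMultRep P g Pc) (x : ↥P × Exp n) :
    syzMultiple P Pc x ∈ homogCompV A (ddeg P) (syzDeg P x) := by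
  rw [homogCompV_eq_span_termBasis, ← sub_add_cancel (syzMultiple P Pc x) (termBasis x)]
  exact add_mem (span_mono (Set.image_mono fun _ hy => hy.2)
    (syzMultiple_sub_mem_span hT hP hMS hPc x)) (subset_span ⟨x, rfl, rfl⟩)

theorem homogCompV_eq_span_syzBasis (hT : IsMonomialIdeal T) (hP : IsPommaretBasis P T)
    (hMS : IsMarkedSetI T P g) (hPc : IsMultRep P g Pc) (s : ℤ) :
    homogCompV A (ddeg P) s = span A (syzBasis hT hP hMS hPc '' {x | syzDeg P x = s}) := by
  refine le_antisymm ?_ (span_le.mpr ?_)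
  · rw [homogCompV_eq_span_termBasis, span_le]
    rintro _ ⟨x, hx, rfl⟩
    have := mem_span_of_sub_mem_span_lt termBasis (syzDeg P)
      (syzMultiple_sub_mem_span hT hP hMS hPc) x
    rwa [coe_syzBasis hT hP hMS hPc, ← show syzDeg P x = s from hx]
  · rintro _ ⟨x, rfl, rfl⟩
    rw [coe_syzBasis hT hP hMS hPc]
    exact syzMultiple_mem_homogCompV hT hP hMS hPc x

theorem ker_syzMap_eq_span (hT : IsMonomialIdeal T) (hP : IsPommaretBasis P T)
    (hMS : IsMarkedSetI T P g) (hPc : IsMultRep P g Pc) :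
    LinearMap.ker ((syzMap P g).restrictScalars A) =
      span A (syzBasis hT hP hMS hPc '' {x | x.2 ∈ Jsyz P x.1}) := by
  refine ker_eq_span_image _ _ (fun x hx => ?_) ?_
  · rw [coe_syzBasis hT hP hMS hPc, syzMultiple, if_pos (show x.2 ∈ Jsyz P x.1 from hx),
      LinearMap.restrictScalars_apply, map_smul,
      syzMap_Ssyz (hPc x.1 _ (not_mult_maxVar hx)).1, smul_zero]
  · have hcompl : {x : ↥P × Exp n | x.2 ∈ Jsyz P x.1}ᶜ = {x | multExp (x.1 : Exp n) x.2} :=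
      Set.ext fun _ => notMem_Jsyz_iff
    rw [hcompl]
    refine (linearIndepOn_syzMap_termBasis hT hP hMS).congr fun x hx => ?_
    rw [Function.comp_apply, coe_syzBasis hT hP hMS hPc, syzMultiple,
      if_neg (notMem_Jsyz_iff.mpr hx)]
    exact congrArg (syzMap P g) (termBasis_apply x)

theorem syzMultiple_mem_GmodS {x : ↥P × Exp n} (hx : x.2 ∈ Jsyz P x.1) :
    syzMultiple P Pc x ∈ GmodS (Psyz P) (syzMarkedSet P Pc) := by
  rw [syzMultiple, if_pos hx]
  refine smul_mem _ _ (subset_span ⟨x.1, Finsupp.single (maxVar x.2) 1,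
    mem_Psyz.mpr ⟨_, not_mult_maxVar hx, rfl⟩, ?_⟩)
  rw [syzMarkedSet, maxVar_single]

theorem GmodS_syzMarkedSet_eq_ker (hT : IsMonomialIdeal T) (hP : IsPommaretBasis P T)
    (hMS : IsMarkedSetI T P g) (hPc : IsMultRep P g Pc) :
    GmodS (Psyz P) (syzMarkedSet P Pc) = LinearMap.ker (syzMap P g) := by
  refine le_antisymm (span_le.mpr ?_) fun v hv => ?_
  · rintro _ ⟨k, α, hα, rfl⟩
    obtain ⟨i, hi, rfl⟩ := mem_Psyz.mp hα
    rw [SetLike.mem_coe, LinearMap.mem_ker, syzMarkedSet, maxVar_single]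
    exact syzMap_Ssyz (hPc k i hi).1
  · have hv' : v ∈ LinearMap.ker ((syzMap P g).restrictScalars A) := hv
    rw [ker_syzMap_eq_span hT hP hMS hPc] at hv'
    refine (span_le (p := (GmodS (Psyz P) (syzMarkedSet P Pc)).restrictScalars A)).mpr ?_ hv'
    rintro _ ⟨x, hx, rfl⟩
    rw [coe_syzBasis hT hP hMS hPc]
    exact syzMultiple_mem_GmodS hx

theorem GmodDeg_syzMarkedSet_eq_span (hT : IsMonomialIdeal T) (hP : IsPommaretBasis P T)
    (hMS : IsMarkedSetI T P g) (hPc : IsMultRep P g Pc) (s : ℤ) :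
    GmodDeg (ddeg P) (Psyz P) (syzMarkedSet P Pc) s =
      span A (syzBasis hT hP hMS hPc '' ({x | x.2 ∈ Jsyz P x.1} ∩ {x | syzDeg P x = s})) := by
  rw [GmodDeg, GmodS_syzMarkedSet_eq_ker hT hP hMS hPc, ← LinearMap.ker_restrictScalars,
    ker_syzMap_eq_span, homogCompV_eq_span_syzBasis hT hP hMS hPc, span_image_inf_span_image]

theorem NUTermsDeg_Jsyz_eq_image (hT : IsMonomialIdeal T) (hP : IsPommaretBasis P T)
    (hMS : IsMarkedSetI T P g) (hPc : IsMultRep P g Pc) (s : ℤ) :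
    NUTermsDeg A (ddeg P) (Jsyz P) s =
      syzBasis hT hP hMS hPc '' ({x | x.2 ∈ Jsyz P x.1}ᶜ ∩ {x | syzDeg P x = s}) := by
  ext v
  rw [coe_syzBasis hT hP hMS hPc]
  constructor
  · rintro ⟨k, α, hα, hdeg, rfl⟩
    exact ⟨(k, α), ⟨hα, hdeg⟩, by rw [syzMultiple, if_neg hα]⟩
  · rintro ⟨x, ⟨hx, hdeg⟩, rfl⟩
    exact ⟨x.1, x.2, hx, hdeg, by rw [syzMultiple, if_neg (show x.2 ∉ Jsyz P x.1 from hx)]⟩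

theorem markedBasisProp_syzMarkedSet (hT : IsMonomialIdeal T) (hP : IsPommaretBasis P T)
    (hMS : IsMarkedSetI T P g) (hPc : IsMultRep P g Pc) :
    MarkedBasisProp (ddeg P) (Jsyz P) (Psyz P) (syzMarkedSet P Pc) := fun s => by
  rw [GmodDeg_syzMarkedSet_eq_span hT hP hMS hPc, NUTermsDeg_Jsyz_eq_image hT hP hMS hPc,
    homogCompV_eq_span_syzBasis hT hP hMS hPc]
  refine ⟨?_, disjoint_iff.mp ((syzBasis hT hP hMS hPc).linearIndependent.disjoint_span_image
    (disjoint_compl_right.mono Set.inter_subset_left Set.inter_subset_left))⟩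
  rw [← span_union, ← Set.image_union, ← Set.union_inter_distrib_right, Set.union_compl_self,
    Set.univ_inter]

theorem isMarkedSetV_syzMarkedSet (hT : IsMonomialIdeal T) (hP : IsPommaretBasis P T)
    (hMS : IsMarkedSetI T P g) (hPc : IsMultRep P g Pc) :
    IsMarkedSetV (ddeg P) (Jsyz P) (Psyz P) (syzMarkedSet P Pc) := by
  intro k α hα l β hβ
  obtain ⟨i, hi, rfl⟩ := mem_Psyz.mp hα
  rw [syzMarkedSet, maxVar_single, Ssyz_sub_termV, Pi.neg_apply, support_neg] at hβ
  obtain ⟨hβJ, hdeg⟩ := notMem_Jsyz_and_degE_add_of_mem_support hT hP hMS hPc hi hβ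
  refine ⟨hβJ, ?_⟩
  simp only [ddeg, degE_single]
  omega

end Syzygies

theorem statement18_general {n : ℕ} {A : Type*} [CommRing A]
    (T : Set (Exp n)) (P : Finset (Exp n))
    (hT : IsMonomialIdeal T) (hP : IsPommaretBasis P T)
    (g : Exp n → MvPolynomial (Fin (n+1)) A) (hG : IsMarkedBasisI T P g)
    (Pc : ↥P → Fin (n+1) → ↥P → MvPolynomial (Fin (n+1)) A)
    (hPc : ∀ (k : ↥P) (i : Fin (n+1)), ¬ mult (k : Exp n) i →
      (X i * g (k : Exp n) = ∑ l : ↥P, Pc k i l * g (l : Exp n)) ∧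
      ∀ l : ↥P, multPoly (l : Exp n) (Pc k i l)) :
    ∃ gs : Exp n → ↥P → (↥P → MvPolynomial (Fin (n+1)) A),
      IsMarkedSetV (ddeg P) (Jsyz P) (Psyz P) gs ∧
      (∀ (k : ↥P) (i : Fin (n+1)), ¬ mult (k : Exp n) i →
        gs (Finsupp.single i 1) k = Ssyz P Pc k i) ∧
      MarkedBasisProp (ddeg P) (Jsyz P) (Psyz P) gs ∧
      GmodS (Psyz P) gs = LinearMap.ker (syzMap P g) :=
  ⟨syzMarkedSet P Pc, isMarkedSetV_syzMarkedSet hT hP hG.1 hPc,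
    fun k i _ => by rw [syzMarkedSet, maxVar_single],
    markedBasisProp_syzMarkedSet hT hP hG.1 hPc, GmodS_syzMarkedSet_eq_ker hT hP hG.1 hPc⟩

/-- Theorem `markedschreyer`, marked Schreyer theorem: `G_Syz` is a
`P(U)`-marked basis of `Syz(G)`; in particular `Syz(G)` is generated by `G_Syz`. -/
theorem statement18 {n : ℕ} {A : Type*} [CommRing A] [IsNoetherianRing A]
    (T : Set (Exp n)) (P : Finset (Exp n))
    (hT : IsMonomialIdeal T) (hP : IsPommaretBasis P T)
    (g : Exp n → MvPolynomial (Fin (n+1)) A) (hG : IsMarkedBasisI T P g)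
    (Pc : ↥P → Fin (n+1) → ↥P → MvPolynomial (Fin (n+1)) A)
    (hPc : ∀ (k : ↥P) (i : Fin (n+1)), ¬ mult (k : Exp n) i →
      (X i * g (k : Exp n) = ∑ l : ↥P, Pc k i l * g (l : Exp n)) ∧
      ∀ l : ↥P, multPoly (l : Exp n) (Pc k i l)) :
    ∃ gs : Exp n → ↥P → (↥P → MvPolynomial (Fin (n+1)) A),
      IsMarkedSetV (ddeg P) (Jsyz P) (Psyz P) gs ∧
      (∀ (k : ↥P) (i : Fin (n+1)), ¬ mult (k : Exp n) i →
        gs (Finsupp.single i 1) k = Ssyz P Pc k i) ∧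
      MarkedBasisProp (ddeg P) (Jsyz P) (Psyz P) gs ∧
      GmodS (Psyz P) gs = LinearMap.ker (syzMap P g) :=
  statement18_general T P hT hP g hG Pc hPc

end MB
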